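/- Let f : I → ℝ^k be any map with Energy₁(f) ≤ ε, let 0 < α ≤ 1/16, and assume ε·√k ≤ 1. Then there exist a point ô ∈ O, a subset Î ⊆ I with |Î| ≥ (1 − α)·|I|, and a map g : Î → ε·ℤ^k with ‖g(v) − (f(v) − f(ô))‖_∞ ≤ ε and ‖g(v)‖₂ ≤ 2·(1 + 0.09/α) for every v ∈ Î, such that (1/C(|Î|,2))·Σ_{{u,v}⊆Î} |⟨g(u),g(v)⟩ − ⟨u,v⟩| ≤ (13 + 0.76/α)·ε, the sum over unordered pairs of distinct points of Î. -/

import Mathlib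

open scoped BigOperators
open scoped Classical

/-- `expans f u v = d_Y(f(u),f(v)) / d_X(u,v)`. -/
noncomputable def expans {α β : Type*} [PseudoMetricSpace α] [PseudoMetricSpace β]
    (f : α → β) (u v : α) : ℝ :=
  dist (f u) (f v) / dist u v

/-- `dist_f(u,v) = max{expans_f(u,v), 1/expans_f(u,v)}`. -/
noncomputable def pairDist {α β : Type*} [PseudoMetricSpace α] [PseudoMetricSpace β]
    (f : α → β) (u v : α) : ℝ :=
  max (expans f u v) (expans f u v)⁻¹

/-- ℓ_q-distortion; the sum over ordered pairs of distinct points divided by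
`|X|·(|X|-1)` equals the sum over unordered pairs divided by `C(|X|,2)`. -/
noncomputable def lqDist {α β : Type*} [PseudoMetricSpace α] [PseudoMetricSpace β]
    (X : Finset α) (f : α → β) (q : ℝ) : ℝ :=
  ((∑ p ∈ X.offDiag, pairDist f p.1 p.2 ^ q) /
      ((X.card : ℝ) * ((X.card : ℝ) - 1))) ^ (1 / q)

/-- `Energy_q(f)`. -/
noncomputable def energy {α β : Type*} [PseudoMetricSpace α] [PseudoMetricSpace β]
    (X : Finset α) (f : α → β) (q : ℝ) : ℝ :=
  ((∑ p ∈ X.offDiag, |expans f p.1 p.2 - 1| ^ q) /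
      ((X.card : ℝ) * ((X.card : ℝ) - 1))) ^ (1 / q)

/-- `REM_q(f)`. -/
noncomputable def rem {α β : Type*} [PseudoMetricSpace α] [PseudoMetricSpace β]
    (X : Finset α) (f : α → β) (q : ℝ) : ℝ :=
  ((∑ p ∈ X.offDiag,
      (|dist (f p.1) (f p.2) - dist p.1 p.2| /
        min (dist (f p.1) (f p.2)) (dist p.1 p.2)) ^ q) /
      ((X.card : ℝ) * ((X.card : ℝ) - 1))) ^ (1 / q)

/-- `Stress_q(f)`. -/
noncomputable def stress {α β : Type*} [PseudoMetricSpace α] [PseudoMetricSpace β]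
    (X : Finset α) (f : α → β) (q : ℝ) : ℝ :=
  ((∑ p ∈ X.offDiag, |dist (f p.1) (f p.2) - dist p.1 p.2| ^ q) /
      (∑ p ∈ X.offDiag, dist p.1 p.2 ^ q)) ^ (1 / q)

/-- `Stress*_q(f)`. -/
noncomputable def stressStar {α β : Type*} [PseudoMetricSpace α] [PseudoMetricSpace β]
    (X : Finset α) (f : α → β) (q : ℝ) : ℝ :=
  ((∑ p ∈ X.offDiag, |dist (f p.1) (f p.2) - dist p.1 p.2| ^ q) /
      (∑ p ∈ X.offDiag, dist (f p.1) (f p.2) ^ q)) ^ (1 / q)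

/-- `Φ_r(f)`, the r-th moment of expansion. -/
noncomputable def phiR {α β : Type*} [PseudoMetricSpace α] [PseudoMetricSpace β]
    (X : Finset α) (f : α → β) (r : ℝ) : ℝ :=
  ((∑ p ∈ X.offDiag, expans f p.1 p.2 ^ r) /
      ((X.card : ℝ) * ((X.card : ℝ) - 1))) ^ (1 / r)

/-- `σ_{q,r}(f)`. -/
noncomputable def sigmaDist {α β : Type*} [PseudoMetricSpace α] [PseudoMetricSpace β]
    (X : Finset α) (f : α → β) (q r : ℝ) : ℝ :=
  ((∑ p ∈ X.offDiag, |expans f p.1 p.2 / phiR X f r - 1| ^ q) /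
      ((X.card : ℝ) * ((X.card : ℝ) - 1))) ^ (1 / q)

/-- Normalized additive stress `S̄tress₁(f)`. -/
noncomputable def sbarStress {α β : Type*} [PseudoMetricSpace α] [PseudoMetricSpace β]
    (X : Finset α) (f : α → β) : ℝ :=
  (∑ p ∈ X.offDiag, |dist (f p.1) (f p.2) - dist p.1 p.2|) /
    ((X.card : ℝ) * ((X.card : ℝ) - 1))

/-! Averaging the energy bound over `O` gives a centre `ô ∈ O` whose star
`∑ v, |expans f ô v - 1|` is at most `3 ε |I|`; by Markov's inequality all but `α |I|` points `v`
have `d(f ô, f v)` within a factor `1 ± 3ε/α` of `d(ô, v)`, so on the remaining set `Î` the centred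
map `h = f - f ô` has norm at most `1 + 0.09/α`. Polarization,
`⟪x, y⟫ = (‖x‖² + ‖y‖² - ‖x - y‖²) / 2`, turns the distortion of the norms (controlled by the star)
and of the pairwise distances (controlled by the energy) into an average inner-product error
`O(ε/α)`. Finally every coordinate of `h` is rounded at random to a neighbour in `ε ℤ`, upwards
with probability its fractional part. The rounding errors are independent and centred, so the
expected change of `⟪h u, h v⟫` is at most `ε (‖h u‖ + ‖h v‖) / 2 + ε² √k / 4`, and some rounding
does no worse than the expectation. -/

open Finset Real RealInnerProductSpace

theorem Finset.sum_offDiag_eq_sum_sum_erase {α : Type*} (s : Finset α) (G : α × α → ℝ) :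
    ∑ q ∈ s.offDiag, G q = ∑ a ∈ s, ∑ b ∈ s.erase a, G (a, b) :=
  sum_finset_product _ _ _ fun q => by simp only [mem_offDiag, mem_erase]; tauto

theorem Finset.sum_offDiag_fst {α : Type*} (s : Finset α) (F : α → ℝ) :
    ∑ q ∈ s.offDiag, F q.1 = (#s - 1) * ∑ a ∈ s, F a := by
  rw [sum_offDiag_eq_sum_sum_erase, mul_sum]
  refine sum_congr rfl fun a ha => ?_
  simp only [sum_const, card_erase_of_mem ha, nsmul_eq_mul, Nat.cast_pred (card_pos.mpr ⟨a, ha⟩)]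

theorem Finset.sum_offDiag_snd {α : Type*} (s : Finset α) (F : α → ℝ) :
    ∑ q ∈ s.offDiag, F q.2 = (#s - 1) * ∑ a ∈ s, F a := by
  rw [sum_offDiag_eq_sum_sum_erase]
  dsimp only
  rw [sum_congr rfl fun a ha => sum_erase_eq_sub (f := F) ha, sum_sub_distrib, sum_const,
    nsmul_eq_mul]
  ring

theorem Finset.cast_card_offDiag {α : Type*} (s : Finset α) :
    (#s.offDiag : ℝ) = #s * (#s - 1) := by
  rw [offDiag_card, Nat.cast_sub (Nat.le_mul_self _)]; push_cast; ring

theorem exists_mem_sum_erase_le_sum_offDiag_div {α : Type*} {I O : Finset α} (hOI : O ⊆ I)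
    (hO : O.Nonempty) (F : α → α → ℝ) (hF : ∀ u v, 0 ≤ F u v) :
    ∃ o ∈ O, ∑ v ∈ I.erase o, F o v ≤ (∑ q ∈ I.offDiag, F q.1 q.2) / #O := by
  apply exists_le_of_sum_le hO
  rw [sum_const, nsmul_eq_mul, mul_div_cancel₀ _ (by positivity), sum_offDiag_eq_sum_sum_erase]
  exact sum_le_sum_of_subset_of_nonneg hOI fun o _ _ => sum_nonneg fun v _ => hF o v

section CenterSelection

variable {X Y : Type*} [PseudoMetricSpace X] [PseudoMetricSpace Y]

theorem sum_abs_expans_sub_one_le_of_energy_le {I : Finset X} {f : X → Y} {ε : ℝ}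
    (h : energy I f 1 ≤ ε) :
    ∑ q ∈ I.offDiag, |expans f q.1 q.2 - 1| ≤ ε * (#I * (#I - 1)) := by
  simp only [energy, rpow_one, div_one] at h
  rw [← cast_card_offDiag] at h ⊢
  rcases (Nat.cast_nonneg (α := ℝ) #I.offDiag).lt_or_eq with hN | hN
  · exact (div_le_iff₀ hN).mp h
  · have hempty : I.offDiag = ∅ := card_eq_zero.mp (by exact_mod_cast hN.symm)
    simp [hempty]

/-- The paper's `Î`; `o` is put in by hand because `expans f o o = 0`. -/
noncomputable def lowDistortionSet (I : Finset X) (f : X → Y) (o : X) (T : ℝ) : Finset X :=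
  I.filter fun v => v = o ∨ |expans f o v - 1| ≤ T

theorem lowDistortionSet_subset (I : Finset X) (f : X → Y) (o : X) (T : ℝ) :
    lowDistortionSet I f o T ⊆ I :=
  filter_subset _ _

theorem card_sub_card_lowDistortionSet_le (I : Finset X) (f : X → Y) (o : X) {T : ℝ}
    (hT : 0 < T) :
    (#I : ℝ) - #(lowDistortionSet I f o T) ≤ (∑ v ∈ I.erase o, |expans f o v - 1|) / T := by
  set bad := I.filter fun v => ¬(v = o ∨ |expans f o v - 1| ≤ T)
  have hsplit : #(lowDistortionSet I f o T) + #bad = #I := card_filter_add_card_filter_not _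
  have hbad : bad ⊆ I.erase o := fun v hv => by
    obtain ⟨hvI, hv⟩ := mem_filter.mp hv
    exact mem_erase.mpr ⟨fun h => hv (Or.inl h), hvI⟩
  have hmarkov : (#bad : ℝ) * T ≤ ∑ v ∈ bad, |expans f o v - 1| := by
    rw [← nsmul_eq_mul]
    exact card_nsmul_le_sum _ _ _ fun v hv =>
      (not_le.mp fun h => (mem_filter.mp hv).2 (Or.inr h)).le
  rw [le_div_iff₀ hT, ← hsplit]
  push_cast
  linarith [sum_le_sum_of_subset_of_nonneg hbad fun v _ _ => abs_nonneg (expans f o v - 1)]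

theorem exists_center_card_lowDistortionSet_ge {I O : Finset X} (hOI : O ⊆ I) (hO : O.Nonempty)
    {f : X → Y} {ε α c : ℝ} (hε : 0 < ε) (hα : 0 < α) (hIO : (#I : ℝ) ≤ c * #O)
    (hE : energy I f 1 ≤ ε) :
    ∃ o ∈ O, ∑ v ∈ I.erase o, |expans f o v - 1| ≤ c * ε * #I ∧
      (1 - α) * #I ≤ #(lowDistortionSet I f o (c * ε / α)) := by
  have hO0 : (0 : ℝ) < #O := by exact_mod_cast hO.card_pos
  have hIO' : (#O : ℝ) ≤ #I := by exact_mod_cast card_le_card hOI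
  have hc : 0 < c := pos_of_mul_pos_left (hO0.trans_le (hIO'.trans hIO)) hO0.le
  obtain ⟨o, hoO, hA⟩ := exists_mem_sum_erase_le_sum_offDiag_div hOI hO
    (fun u v => |expans f u v - 1|) fun _ _ => abs_nonneg _
  have hA' : ∑ v ∈ I.erase o, |expans f o v - 1| ≤ c * ε * #I := by
    refine hA.trans ((div_le_iff₀ hO0).mpr ?_)
    calc _ ≤ ε * (#I * (#I - 1)) := sum_abs_expans_sub_one_le_of_energy_le hE
      _ ≤ ε * #I * #I := by nlinarith
      _ ≤ ε * #I * (c * #O) := by gcongr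
      _ = _ := by ring
  refine ⟨o, hoO, hA', ?_⟩
  have := card_sub_card_lowDistortionSet_le I f o (show 0 < c * ε / α by positivity)
  rw [div_div_eq_mul_div, le_div_iff₀ (by positivity)] at this
  have hle : ((#I : ℝ) - #(lowDistortionSet I f o (c * ε / α))) * (c * ε) ≤ α * #I * (c * ε) := by
    linarith [mul_le_mul_of_nonneg_right hA' hα.le]
  linarith [le_of_mul_le_mul_right hle (by positivity)]

end CenterSelection

section MetricDistortion

variable {X Y : Type*} [MetricSpace X] [PseudoMetricSpace Y]

theorem dist_eq_expans_mul (f : X → Y) (u v : X) : dist (f u) (f v) = expans f u v * dist u v := by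
  rcases eq_or_ne u v with rfl | huv
  · simp [expans]
  · rw [expans, div_mul_cancel₀ _ (dist_ne_zero.mpr huv)]

theorem abs_dist_sub_dist_eq (f : X → Y) (u v : X) :
    |dist (f u) (f v) - dist u v| = |expans f u v - 1| * dist u v := by
  rw [dist_eq_expans_mul, ← sub_one_mul, abs_mul, abs_of_nonneg dist_nonneg]

theorem abs_dist_sq_sub_dist_sq_eq (f : X → Y) (u v : X) :
    |dist (f u) (f v) ^ 2 - dist u v ^ 2|
      = |expans f u v - 1| * dist u v * (dist (f u) (f v) + dist u v) := by
  rw [sq_sub_sq, abs_mul, abs_of_nonneg (by positivity), abs_dist_sub_dist_eq]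
  ring

theorem dist_le_of_mem_lowDistortionSet {I : Finset X} {f : X → Y} {o v : X} {T : ℝ}
    (hv : v ∈ lowDistortionSet I f o T) :
    dist (f o) (f v) ≤ (1 + T) * dist o v := by
  rw [dist_eq_expans_mul]
  rcases (mem_filter.mp hv).2 with rfl | hT
  · simp
  · exact mul_le_mul_of_nonneg_right (by linarith [(abs_le.mp hT).2]) dist_nonneg

theorem sum_abs_dist_sub_dist_le {I J : Finset X} (hJI : J ⊆ I)
    (f : X → Y) (o : X) {R : ℝ} (hR : ∀ v ∈ I, dist o v ≤ R) :
    ∑ v ∈ J, |dist (f o) (f v) - dist o v| ≤ R * ∑ v ∈ I.erase o, |expans f o v - 1| := by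
  simp_rw [abs_dist_sub_dist_eq, mul_sum]
  calc _ ≤ ∑ v ∈ I, |expans f o v - 1| * dist o v :=
        sum_le_sum_of_subset_of_nonneg hJI fun v _ _ => by positivity
    _ = ∑ v ∈ I.erase o, |expans f o v - 1| * dist o v := (sum_erase _ (by simp)).symm
    _ ≤ _ := sum_le_sum fun v hv => by
        rw [mul_comm R]
        exact mul_le_mul_of_nonneg_left (hR v (mem_of_mem_erase hv)) (abs_nonneg _)

end MetricDistortion

theorem norm_sub_le_of_mem_lowDistortionSet {E F : Type*} [NormedAddCommGroup E]
    [NormedAddCommGroup F] {I : Finset E} {f : E → F} {o v : E} {T : ℝ} (hT : 0 ≤ T)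
    (hv : v ∈ lowDistortionSet I f o T) : ‖f v - f o‖ ≤ (1 + T) * (‖o‖ + ‖v‖) := by
  rw [← dist_eq_norm, dist_comm]
  exact (dist_le_of_mem_lowDistortionSet hv).trans (by gcongr; exact dist_le_norm_add_norm o v)


theorem abs_norm_sub_sq_sub_norm_sq_le {E F : Type*} [SeminormedAddCommGroup E]
    [SeminormedAddCommGroup F] (φ : E → F) (o v : E) :
    |‖φ v - φ o‖ ^ 2 - ‖v‖ ^ 2|
      ≤ (|dist (φ o) (φ v) - dist o v| + ‖o‖) * (‖φ v - φ o‖ + ‖v‖) := by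
  rw [sq_sub_sq, abs_mul, abs_of_nonneg (by positivity), mul_comm]
  gcongr
  calc |‖φ v - φ o‖ - ‖v‖| ≤ |‖φ v - φ o‖ - ‖v - o‖| + |‖v - o‖ - ‖v‖| := abs_sub_le _ _ _
    _ ≤ |dist (φ o) (φ v) - dist o v| + ‖o‖ := by
      have ho := abs_norm_sub_norm_le (v - o) v
      rw [sub_sub_cancel_left, norm_neg] at ho
      rw [dist_comm (φ o), dist_comm o, dist_eq_norm, dist_eq_norm]
      exact add_le_add_right ho _

section InnerProductDistortion

variable {E F : Type*} [NormedAddCommGroup E] [InnerProductSpace ℝ E]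
  [NormedAddCommGroup F] [InnerProductSpace ℝ F]

theorem abs_inner_sub_inner_le (x y : E) (x' y' : F) :
    |⟪x, y⟫ - ⟪x', y'⟫|
      ≤ (|‖x‖ ^ 2 - ‖x'‖ ^ 2| + |‖y‖ ^ 2 - ‖y'‖ ^ 2| + |‖x - y‖ ^ 2 - ‖x' - y'‖ ^ 2|) / 2 := by
  have hpolar : ⟪x, y⟫ - ⟪x', y'⟫
      = ((‖x‖ ^ 2 - ‖x'‖ ^ 2) + (‖y‖ ^ 2 - ‖y'‖ ^ 2) - (‖x - y‖ ^ 2 - ‖x' - y'‖ ^ 2)) / 2 := by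
    rw [norm_sub_sq_real, norm_sub_sq_real]; ring
  rw [hpolar, abs_div, abs_two]
  gcongr
  exact (abs_sub _ _).trans (add_le_add_left (abs_add_le _ _) _)

theorem sum_abs_inner_sub_sub_inner_le (J : Finset E) (φ : E → F) (o : E) {R D B : ℝ}
    (hR : ∀ v ∈ J, ‖v‖ ≤ R) (hD : ∀ u ∈ J, ∀ v ∈ J, dist u v ≤ D)
    (hB : ∀ v ∈ J, ‖φ v - φ o‖ ≤ B) :
    ∑ q ∈ J.offDiag, |⟪φ q.1 - φ o, φ q.2 - φ o⟫ - ⟪q.1, q.2⟫|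
      ≤ (#J - 1) * (B + R) * ∑ v ∈ J, (|dist (φ o) (φ v) - dist o v| + ‖o‖)
        + D * (2 * B + D) / 2 * ∑ q ∈ J.offDiag, |expans φ q.1 q.2 - 1| := by
  set V := fun v => (|dist (φ o) (φ v) - dist o v| + ‖o‖) * (B + R)
  have hvert : ∀ v ∈ J, |‖φ v - φ o‖ ^ 2 - ‖v‖ ^ 2| ≤ V v := fun v hv =>
    (abs_norm_sub_sq_sub_norm_sq_le φ o v).trans
      (mul_le_mul_of_nonneg_left (add_le_add (hB v hv) (hR v hv)) (by positivity))
  have hpair : ∀ q ∈ J.offDiag, |‖(φ q.1 - φ o) - (φ q.2 - φ o)‖ ^ 2 - ‖q.1 - q.2‖ ^ 2|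
      ≤ D * (2 * B + D) * |expans φ q.1 q.2 - 1| := fun q hq => by
    obtain ⟨hq₁, hq₂, -⟩ := mem_offDiag.mp hq
    have hφ : dist (φ q.1) (φ q.2) ≤ 2 * B := by
      rw [dist_eq_norm, ← sub_sub_sub_cancel_right _ _ (φ o), two_mul]
      exact (norm_sub_le _ _).trans (add_le_add (hB _ hq₁) (hB _ hq₂))
    rw [sub_sub_sub_cancel_right, ← dist_eq_norm, ← dist_eq_norm, abs_dist_sq_sub_dist_sq_eq,
      mul_comm (D * _)]
    have hd := hD _ hq₁ _ hq₂
    rw [mul_assoc]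
    exact mul_le_mul_of_nonneg_left
      (mul_le_mul hd (by linarith) (by positivity) (dist_nonneg.trans hd)) (abs_nonneg _)
  calc _ ≤ ∑ q ∈ J.offDiag, ((V q.1 + V q.2) / 2 + D * (2 * B + D) / 2 * |expans φ q.1 q.2 - 1|) :=
        sum_le_sum fun q hq => by
          obtain ⟨hq₁, hq₂, -⟩ := mem_offDiag.mp hq
          refine (abs_inner_sub_inner_le _ _ _ _).trans ?_
          linarith [hvert _ hq₁, hvert _ hq₂, hpair q hq]
    _ = _ := by
        rw [sum_add_distrib, ← sum_div, sum_add_distrib, sum_offDiag_fst, sum_offDiag_snd,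
          ← mul_sum]
        simp only [V, ← sum_mul]
        ring

end InnerProductDistortion

section BernoulliExpectation

variable {ι : Type*} [Fintype ι] (p : ι → ℝ)

/-- The law of independent coordinates `σ c`, where `σ c = true` with probability `p c`. -/
noncomputable def bernoulliWeight (σ : ι → Bool) : ℝ :=
  ∏ c, if σ c then p c else 1 - p c

noncomputable def bernoulliExpect (X : (ι → Bool) → ℝ) : ℝ :=
  ∑ σ, bernoulliWeight p σ * X σ

theorem bernoulliExpect_prod (s : Finset ι) (F : ι → Bool → ℝ) :
    bernoulliExpect p (fun σ => ∏ c ∈ s, F c (σ c))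
      = ∏ c ∈ s, ((1 - p c) * F c false + p c * F c true) := by
  let G : ι → Bool → ℝ := fun c b => (if b then p c else 1 - p c) * if c ∈ s then F c b else 1
  have hterm : ∀ σ : ι → Bool,
      bernoulliWeight p σ * ∏ c ∈ s, F c (σ c) = ∏ c, G c (σ c) := fun σ => by
    rw [bernoulliWeight, ← Fintype.prod_ite_mem s, ← prod_mul_distrib]
  have hfactor : ∀ c, ∑ b, G c b = if c ∈ s then (1 - p c) * F c false + p c * F c true else 1 :=
    fun c => by by_cases hc : c ∈ s <;> simp [G, hc, add_comm]
  simp only [bernoulliExpect, hterm]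
  rw [← Fintype.prod_ite_mem, ← Fintype.piFinset_univ, ← prod_univ_sum]
  exact prod_congr rfl fun c _ => hfactor c

theorem sum_bernoulliWeight : ∑ σ, bernoulliWeight p σ = 1 := by
  simpa [bernoulliExpect] using bernoulliExpect_prod p ∅ fun _ _ => 1

theorem bernoulliExpect_add (X Y : (ι → Bool) → ℝ) :
    bernoulliExpect p (fun σ => X σ + Y σ) = bernoulliExpect p X + bernoulliExpect p Y := by
  simp only [bernoulliExpect, mul_add, sum_add_distrib]

theorem bernoulliExpect_const_mul (r : ℝ) (X : (ι → Bool) → ℝ) :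
    bernoulliExpect p (fun σ => r * X σ) = r * bernoulliExpect p X := by
  simp only [bernoulliExpect, mul_sum, mul_left_comm]

theorem bernoulliExpect_sum {κ : Type*} (t : Finset κ) (X : κ → (ι → Bool) → ℝ) :
    bernoulliExpect p (fun σ => ∑ i ∈ t, X i σ) = ∑ i ∈ t, bernoulliExpect p (X i) := by
  simp only [bernoulliExpect, mul_sum]
  exact sum_comm

variable {p}

theorem bernoulliWeight_nonneg (hp : ∀ c, p c ∈ Set.Icc 0 1) (σ : ι → Bool) :
    0 ≤ bernoulliWeight p σ :=
  prod_nonneg fun c _ => by split <;> linarith [(hp c).1, (hp c).2]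

theorem bernoulliExpect_mono (hp : ∀ c, p c ∈ Set.Icc 0 1) {X Y : (ι → Bool) → ℝ}
    (h : ∀ σ, X σ ≤ Y σ) : bernoulliExpect p X ≤ bernoulliExpect p Y :=
  sum_le_sum fun σ _ => mul_le_mul_of_nonneg_left (h σ) (bernoulliWeight_nonneg hp σ)

theorem exists_le_bernoulliExpect (hp : ∀ c, p c ∈ Set.Icc 0 1) (X : (ι → Bool) → ℝ) :
    ∃ σ, X σ ≤ bernoulliExpect p X := by
  by_contra! hlt
  have hpos : ∃ σ, 0 < bernoulliWeight p σ := by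
    by_contra! h0
    linarith [sum_bernoulliWeight p, sum_nonpos fun σ (_ : σ ∈ univ) => h0 σ]
  obtain ⟨σ₀, hσ₀⟩ := hpos
  have : ∑ σ, bernoulliWeight p σ * bernoulliExpect p X < bernoulliExpect p X :=
    sum_lt_sum (fun σ _ => mul_le_mul_of_nonneg_left (hlt σ).le (bernoulliWeight_nonneg hp σ))
      ⟨σ₀, mem_univ _, mul_lt_mul_of_pos_left (hlt σ₀) hσ₀⟩
  rw [← sum_mul, sum_bernoulliWeight, one_mul] at this
  exact this.false

theorem bernoulliExpect_abs_le_sqrt (hp : ∀ c, p c ∈ Set.Icc 0 1) (X : (ι → Bool) → ℝ) :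
    bernoulliExpect p (fun σ => |X σ|) ≤ √(bernoulliExpect p fun σ => X σ ^ 2) := by
  have hw := bernoulliWeight_nonneg hp
  apply le_sqrt_of_sq_le
  calc (bernoulliExpect p fun σ => |X σ|) ^ 2
      ≤ (∑ σ, bernoulliWeight p σ) * bernoulliExpect p (fun σ => X σ ^ 2) :=
        sum_sq_le_sum_mul_sum_of_sq_le_mul _ (fun σ _ => hw σ)
          (fun σ _ => mul_nonneg (hw σ) (sq_nonneg _))
          fun σ _ => (by rw [mul_pow, sq_abs]; ring : _ = _).le
    _ = _ := by rw [sum_bernoulliWeight, one_mul]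

theorem bernoulliExpect_abs_sum_le_of_orthogonal (hp : ∀ c, p c ∈ Set.Icc 0 1) {κ : Type*}
    [Fintype κ] (X : κ → (ι → Bool) → ℝ)
    (horth : ∀ i j, i ≠ j → bernoulliExpect p (fun σ => X i σ * X j σ) = 0) :
    bernoulliExpect p (fun σ => |∑ i, X i σ|) ≤ √(∑ i, bernoulliExpect p fun σ => X i σ ^ 2) := by
  have hsq : (bernoulliExpect p fun σ => (∑ i, X i σ) ^ 2)
      = ∑ i, bernoulliExpect p fun σ => X i σ ^ 2 := by
    simp_rw [sq, sum_mul_sum, bernoulliExpect_sum]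
    refine sum_congr rfl fun i _ => ?_
    rw [sum_eq_single i (fun j _ hji => horth i j hji.symm) (by simp)]
  exact (bernoulliExpect_abs_le_sqrt hp _).trans_eq (by rw [hsq])

end BernoulliExpectation

section CenteredNoise

variable {ι κ : Type*} [Fintype ι] [Fintype κ] {p : ι → ℝ} {δ : ι → Bool → ℝ} {s : ℝ}

theorem bernoulliExpect_abs_sum_mul_le (hp : ∀ c, p c ∈ Set.Icc 0 1)
    (hmean : ∀ c, (1 - p c) * δ c false + p c * δ c true = 0)
    (hvar : ∀ c, (1 - p c) * δ c false ^ 2 + p c * δ c true ^ 2 ≤ s ^ 2) (hs : 0 ≤ s)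
    {e : κ → ι} (he : Function.Injective e) (y : κ → ℝ) :
    bernoulliExpect p (fun σ => |∑ i, δ (e i) (σ (e i)) * y i|) ≤ s * √(∑ i, y i ^ 2) := by
  refine (bernoulliExpect_abs_sum_le_of_orthogonal hp _ fun i j hij => ?_).trans ?_
  · have hpair : ∀ σ : ι → Bool, δ (e i) (σ (e i)) * y i * (δ (e j) (σ (e j)) * y j)
        = y i * y j * ∏ c ∈ {e i, e j}, δ c (σ c) := fun σ => by
      rw [prod_pair (he.ne hij)]; ring
    simp only [hpair, bernoulliExpect_const_mul]
    rw [bernoulliExpect_prod, prod_pair (he.ne hij), hmean, zero_mul, mul_zero]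
  · have hterm : ∀ i,
        (bernoulliExpect p fun σ => (δ (e i) (σ (e i)) * y i) ^ 2) ≤ s ^ 2 * y i ^ 2 := fun i => by
        have := bernoulliExpect_prod p {e i} fun c b => δ c b ^ 2
        simp only [prod_singleton] at this
        simp only [mul_pow, mul_comm _ (y i ^ 2), bernoulliExpect_const_mul, this]
        nlinarith [hvar (e i), sq_nonneg (y i)]
    calc √(∑ i, bernoulliExpect p fun σ => (δ (e i) (σ (e i)) * y i) ^ 2)
        ≤ √(∑ i, s ^ 2 * y i ^ 2) := sqrt_le_sqrt (sum_le_sum fun i _ => hterm i)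
      _ = s * √(∑ i, y i ^ 2) := by rw [← mul_sum, sqrt_mul (sq_nonneg s), sqrt_sq hs]

theorem bernoulliExpect_abs_sum_mul_mul_le (hp : ∀ c, p c ∈ Set.Icc 0 1)
    (hmean : ∀ c, (1 - p c) * δ c false + p c * δ c true = 0)
    (hvar : ∀ c, (1 - p c) * δ c false ^ 2 + p c * δ c true ^ 2 ≤ s ^ 2)
    {e₁ e₂ : κ → ι} (he₁ : Function.Injective e₁) (he₂ : Function.Injective e₂)
    (hdisj : ∀ i j, e₁ i ≠ e₂ j) :
    bernoulliExpect p (fun σ => |∑ i, δ (e₁ i) (σ (e₁ i)) * δ (e₂ i) (σ (e₂ i))|)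
      ≤ s ^ 2 * √(Fintype.card κ) := by
  refine (bernoulliExpect_abs_sum_le_of_orthogonal hp _ fun i j hij => ?_).trans ?_
  · have hquad : ∀ σ : ι → Bool,
        δ (e₁ i) (σ (e₁ i)) * δ (e₂ i) (σ (e₂ i)) * (δ (e₁ j) (σ (e₁ j)) * δ (e₂ j) (σ (e₂ j)))
          = ∏ c ∈ {e₁ i, e₂ i, e₁ j, e₂ j}, δ c (σ c) := fun σ => by
      rw [prod_insert (by simp [hdisj, he₁.ne hij]), prod_insert (by simp [he₂.ne hij,
        (hdisj j i).symm]), prod_pair (hdisj j j)]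
      ring
    simp only [hquad, bernoulliExpect_prod]
    exact prod_eq_zero (mem_insert_self _ _) (hmean _)
  · have hterm : ∀ i, (bernoulliExpect p fun σ =>
        (δ (e₁ i) (σ (e₁ i)) * δ (e₂ i) (σ (e₂ i))) ^ 2) ≤ (s ^ 2) ^ 2 := fun i => by
      have := bernoulliExpect_prod p {e₁ i, e₂ i} fun c b => δ c b ^ 2
      simp only [prod_pair (hdisj i i)] at this
      simp only [mul_pow, this]
      have h0 : ∀ c, 0 ≤ (1 - p c) * δ c false ^ 2 + p c * δ c true ^ 2 := fun c => by
        nlinarith [(hp c).1, (hp c).2, sq_nonneg (δ c false), sq_nonneg (δ c true)]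
      calc _ ≤ s ^ 2 * s ^ 2 := mul_le_mul (hvar _) (hvar _) (h0 _) (sq_nonneg s)
        _ = (s ^ 2) ^ 2 := by ring
    calc √(∑ i, bernoulliExpect p fun σ => (δ (e₁ i) (σ (e₁ i)) * δ (e₂ i) (σ (e₂ i))) ^ 2)
        ≤ √(∑ _i : κ, (s ^ 2) ^ 2) := sqrt_le_sqrt (sum_le_sum fun i _ => hterm i)
      _ = s ^ 2 * √(Fintype.card κ) := by
        rw [sum_const, card_univ, nsmul_eq_mul, sqrt_mul' _ (sq_nonneg _), sqrt_sq (sq_nonneg s),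
          mul_comm]

end CenteredNoise

section RandomizedRounding

/-- The error of rounding a real `x` on the grid `ε ℤ` up (`b = true`) or down, where
`p c = Int.fract (x / ε)`. -/
noncomputable def roundingError {ι : Type*} (ε : ℝ) (p : ι → ℝ) (c : ι) (b : Bool) : ℝ :=
  ε * ((if b then 1 else 0) - p c)

variable {ι : Type*} {ε : ℝ} {p : ι → ℝ}

theorem roundingError_mean (c : ι) :
    (1 - p c) * roundingError ε p c false + p c * roundingError ε p c true = 0 := by
  simp only [roundingError, Bool.false_eq_true, ↓reduceIte]; ring

theorem roundingError_var (c : ι) :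
    (1 - p c) * roundingError ε p c false ^ 2 + p c * roundingError ε p c true ^ 2
      ≤ (ε / 2) ^ 2 := by
  simp only [roundingError, Bool.false_eq_true, ↓reduceIte]
  nlinarith [sq_nonneg ε, sq_nonneg (ε * (1 - 2 * p c))]

theorem abs_roundingError_le (hε : 0 ≤ ε) (hp : ∀ c, p c ∈ Set.Icc 0 1) (c : ι) (b : Bool) :
    |roundingError ε p c b| ≤ ε := by
  obtain ⟨h0, h1⟩ := hp c
  rw [roundingError, abs_mul, abs_of_nonneg hε]
  refine mul_le_of_le_one_right hε (abs_le.mpr ⟨?_, ?_⟩) <;> cases b <;> simp <;> linarith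

variable {α : Type*} {k : ℕ} (ε) (J : Finset α) (h : α → EuclideanSpace ℝ (Fin k))

noncomputable def roundUpProb (c : J × Fin k) : ℝ := Int.fract (h c.1 c.2 / ε)

noncomputable def randomRound (σ : J × Fin k → Bool) (x : α) : EuclideanSpace ℝ (Fin k) :=
  if hx : x ∈ J then
    WithLp.toLp 2 fun i => ε * (⌊h x i / ε⌋ + if σ (⟨x, hx⟩, i) then 1 else 0)
  else 0

variable {ε J h}

theorem roundUpProb_mem_Icc (c : J × Fin k) : roundUpProb ε J h c ∈ Set.Icc 0 1 :=
  ⟨Int.fract_nonneg _, (Int.fract_lt_one _).le⟩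

theorem randomRound_mem_grid (σ : J × Fin k → Bool) (x : α) (i : Fin k) :
    ∃ m : ℤ, randomRound ε J h σ x i = m * ε := by
  by_cases hx : x ∈ J
  · exact ⟨⌊h x i / ε⌋ + if σ (⟨x, hx⟩, i) then 1 else 0, by
      simp only [randomRound, hx, dite_true]; push_cast; ring⟩
  · exact ⟨0, by simp [randomRound, hx]⟩

theorem randomRound_apply (hε : ε ≠ 0) (σ : J × Fin k → Bool) {x : α} (hx : x ∈ J) (i : Fin k) :
    randomRound ε J h σ x i
      = h x i + roundingError ε (roundUpProb ε J h) (⟨x, hx⟩, i) (σ (⟨x, hx⟩, i)) := by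
  have hfloor : ε * ⌊h x i / ε⌋ = h x i - ε * Int.fract (h x i / ε) := by
    rw [Int.fract, mul_sub, mul_div_cancel₀ _ hε]; ring
  simp only [randomRound, hx, dite_true, roundingError, roundUpProb]
  split <;> linear_combination hfloor

theorem abs_randomRound_sub_le (hε : 0 < ε) (σ : J × Fin k → Bool) {x : α} (hx : x ∈ J)
    (i : Fin k) : |randomRound ε J h σ x i - h x i| ≤ ε := by
  rw [randomRound_apply hε.ne' σ hx, add_sub_cancel_left]
  exact abs_roundingError_le hε.le roundUpProb_mem_Icc _ _

theorem bernoulliExpect_abs_inner_randomRound_sub_le (hε : 0 < ε) {x y : α} (hx : x ∈ J)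
    (hy : y ∈ J) (hxy : x ≠ y) :
    bernoulliExpect (roundUpProb ε J h)
        (fun σ => |⟪randomRound ε J h σ x, randomRound ε J h σ y⟫ - ⟪h x, h y⟫|)
      ≤ ε / 2 * (‖h x‖ + ‖h y‖) + (ε / 2) ^ 2 * √k := by
  set δ := roundingError ε (roundUpProb ε J h)
  set ex : Fin k → J × Fin k := fun i => (⟨x, hx⟩, i)
  set ey : Fin k → J × Fin k := fun i => (⟨y, hy⟩, i)
  have hex : Function.Injective ex := Prod.mk_right_injective _
  have hey : Function.Injective ey := Prod.mk_right_injective _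
  have hdisj : ∀ i j, ex i ≠ ey j := fun i j hij =>
    hxy (congrArg Subtype.val (congrArg Prod.fst hij))
  have hexpand : ∀ σ, ⟪randomRound ε J h σ x, randomRound ε J h σ y⟫ - ⟪h x, h y⟫
      = ∑ i, δ (ex i) (σ (ex i)) * h y i + ∑ i, δ (ey i) (σ (ey i)) * h x i
        + ∑ i, δ (ex i) (σ (ex i)) * δ (ey i) (σ (ey i)) := fun σ => by
    simp only [PiLp.inner_apply, RCLike.inner_apply, conj_trivial,
      randomRound_apply hε.ne' σ hx, randomRound_apply hε.ne' σ hy, ← sum_add_distrib,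
      ← sum_sub_distrib]
    exact sum_congr rfl fun i _ => by ring
  have hnorm : ∀ z : EuclideanSpace ℝ (Fin k), √(∑ i, z i ^ 2) = ‖z‖ := fun z => by
    rw [← EuclideanSpace.real_norm_sq_eq, sqrt_sq (norm_nonneg z)]
  have hp := roundUpProb_mem_Icc (ε := ε) (J := J) (h := h)
  have hlin := fun (e : Fin k → J × Fin k) (he : Function.Injective e) (z : α) =>
    bernoulliExpect_abs_sum_mul_le hp (fun _ => roundingError_mean _) (fun _ => roundingError_var _)
      (by positivity) he (fun i => h z i)
  calc _ ≤ bernoulliExpect (roundUpProb ε J h) (fun σ =>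
          |∑ i, δ (ex i) (σ (ex i)) * h y i| + |∑ i, δ (ey i) (σ (ey i)) * h x i|
            + |∑ i, δ (ex i) (σ (ex i)) * δ (ey i) (σ (ey i))|) :=
        bernoulliExpect_mono hp fun σ => by rw [hexpand]; exact abs_add_three _ _ _
    _ ≤ ε / 2 * ‖h y‖ + ε / 2 * ‖h x‖ + (ε / 2) ^ 2 * √(Fintype.card (Fin k)) := by
        rw [bernoulliExpect_add, bernoulliExpect_add, ← hnorm, ← hnorm]
        gcongr
        · exact hlin ex hex y
        · exact hlin ey hey x
        · exact bernoulliExpect_abs_sum_mul_mul_le hp (fun _ => roundingError_mean _)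
            (fun _ => roundingError_var _) hex hey hdisj
    _ = _ := by rw [Fintype.card_fin]; ring

theorem exists_grid_rounding_sum_abs_inner_sub_le (hε : 0 < ε) (J : Finset α)
    (h : α → EuclideanSpace ℝ (Fin k)) {B : ℝ} (hB : ∀ x ∈ J, ‖h x‖ ≤ B) :
    ∃ g : α → EuclideanSpace ℝ (Fin k),
      (∀ x ∈ J, ∀ i, (∃ m : ℤ, g x i = m * ε) ∧ |g x i - h x i| ≤ ε) ∧
      ∑ q ∈ J.offDiag, |⟪g q.1, g q.2⟫ - ⟪h q.1, h q.2⟫|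
        ≤ #J.offDiag * (ε * B + (ε / 2) ^ 2 * √k) := by
  obtain ⟨σ, hσ⟩ := exists_le_bernoulliExpect roundUpProb_mem_Icc fun σ =>
    ∑ q ∈ J.offDiag, |⟪randomRound ε J h σ q.1, randomRound ε J h σ q.2⟫ - ⟪h q.1, h q.2⟫|
  refine ⟨randomRound ε J h σ, fun x hx i =>
    ⟨randomRound_mem_grid σ x i, abs_randomRound_sub_le hε σ hx i⟩, hσ.trans ?_⟩
  rw [bernoulliExpect_sum, ← nsmul_eq_mul]
  refine sum_le_card_nsmul _ _ _ fun q hq => ?_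
  obtain ⟨hq₁, hq₂, hne⟩ := mem_offDiag.mp hq
  refine (bernoulliExpect_abs_inner_randomRound_sub_le hε hq₁ hq₂ hne).trans ?_
  nlinarith [hB _ hq₁, hB _ hq₂]

end RandomizedRounding

theorem EuclideanSpace.norm_le_mul_sqrt_card {ι : Type*} [Fintype ι] {x : EuclideanSpace ℝ ι}
    {r : ℝ} (hr : 0 ≤ r) (hx : ∀ i, |x i| ≤ r) : ‖x‖ ≤ r * √(Fintype.card ι) := by
  rw [← sqrt_sq hr, ← sqrt_mul (sq_nonneg r), mul_comm, ← nsmul_eq_mul, ← card_univ,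
    ← sum_const, ← sqrt_sq (norm_nonneg x), EuclideanSpace.real_norm_sq_eq]
  exact sqrt_le_sqrt (sum_le_sum fun i _ => sq_le_sq' (abs_le.mp (hx i)).1 (abs_le.mp (hx i)).2)

theorem le_of_one_sub_mul_le {n m α : ℝ} (hα : α ≤ 1 / 16) (hn : 21 ≤ n) (h : (1 - α) * n ≤ m) :
    19 ≤ m ∧ n ≤ 16 / 15 * m ∧ n * (n - 1) ≤ 6 / 5 * (m * (m - 1)) := by
  have h1 : n ≤ 16 / 15 * m := by nlinarith
  exact ⟨by linarith, h1, by nlinarith⟩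

theorem one_add_mul_one_add_le {ε α : ℝ} (hε : 0 < ε) (hε1 : ε ≤ 1 / 36) (hα : 0 < α)
    (hα1 : α ≤ 1 / 16) : (1 + 3 * ε / α) * (ε / 100 + 1) ≤ 1 + 0.09 / α := by
  have hα' : 16 ≤ 1 / α := by rw [le_div_iff₀ hα]; linarith
  have h1 := mul_le_mul_of_nonneg_right hε1 (by positivity : (0 : ℝ) ≤ 1 / α)
  have h2 := mul_le_mul_of_nonneg_right hε1 (by positivity : (0 : ℝ) ≤ ε * (1 / α))
  rw [div_eq_mul_one_div 0.09, div_eq_mul_one_div (3 * ε)]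
  nlinarith

theorem grid_error_budget_le {ε α : ℝ} (hε : 0 < ε) (hα : 0 < α) :
    ε * (1 + 0.09 / α) + ε / 4
      + ε * (3.25 * (1 + 0.09 / α + 1) + 1.2 * (1.5 * (1 + 0.09 / α) + 1))
      ≤ (13 + 0.76 / α) * ε := by
  have : 0 ≤ ε * α⁻¹ := by positivity
  ring_nf; linarith

theorem sum_abs_inner_centered_sub_inner_le {E F : Type*} [NormedAddCommGroup E]
    [InnerProductSpace ℝ E] [NormedAddCommGroup F] [InnerProductSpace ℝ F] {I J : Finset E}
    {f : E → F} {o : E} {ε α B : ℝ} (hε : 0 < ε) (hε1 : ε ≤ 1 / 36) (hα : α ≤ 1 / 16)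
    (hJI : J ⊆ I) (hI : 21 ≤ (#I : ℝ)) (hJ : (1 - α) * #I ≤ #J) (hIball : ∀ x ∈ I, ‖x‖ ≤ 1)
    (hIdiam : ∀ u ∈ I, ∀ v ∈ I, dist u v ≤ √2) (ho : ‖o‖ ≤ ε / 100)
    (hstar : ∑ v ∈ I.erase o, |expans f o v - 1| ≤ 3 * ε * #I)
    (hS : ∑ q ∈ I.offDiag, |expans f q.1 q.2 - 1| ≤ ε * (#I * (#I - 1)))
    (hB : ∀ v ∈ J, ‖f v - f o‖ ≤ B) :
    ∑ q ∈ J.offDiag, |⟪f q.1 - f o, f q.2 - f o⟫ - ⟪q.1, q.2⟫|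
      ≤ ε * (3.25 * (B + 1) + 1.2 * (1.5 * B + 1)) * (#J * (#J - 1)) := by
  obtain ⟨hm, hn, hnn⟩ := le_of_one_sub_mul_le hα hI hJ
  have hB0 : 0 ≤ B := by
    obtain ⟨v, hv⟩ := card_pos.mp (show 0 < #J by exact_mod_cast (by linarith : (0 : ℝ) < #J))
    exact (norm_nonneg _).trans (hB v hv)
  have hvert : ∑ v ∈ J, (|dist (f o) (f v) - dist o v| + ‖o‖) ≤ 3.25 * ε * #J := by
    have hR : ∀ v ∈ I, dist o v ≤ 1 + ε / 100 := fun v hv =>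
      (dist_le_norm_add_norm o v).trans (by linarith [hIball v hv])
    have hdist := sum_abs_dist_sub_dist_le hJI f o hR
    have hstar' : (1 + ε / 100) * (3 * ε * #I) ≤ 1.001 * (3 * ε * (16 / 15 * #J)) :=
      mul_le_mul (by linarith) (by gcongr) (by positivity) (by norm_num)
    rw [sum_add_distrib, sum_const, nsmul_eq_mul]
    have h1 := mul_le_mul_of_nonneg_left hstar (by linarith : (0 : ℝ) ≤ 1 + ε / 100)
    have h2 := mul_le_mul_of_nonneg_left ho (Nat.cast_nonneg (α := ℝ) #J)
    have h3 : 0 ≤ ε * #J := by positivity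
    linarith
  have hpair : ∑ q ∈ J.offDiag, |expans f q.1 q.2 - 1| ≤ ε * (6 / 5 * (#J * (#J - 1))) :=
    (sum_le_sum_of_subset_of_nonneg (offDiag_mono hJI) fun _ _ _ => abs_nonneg _).trans
      (hS.trans (by gcongr))
  have hsqrt2 : √2 * (2 * B + √2) / 2 ≤ 1.5 * B + 1 := by
    have h2 := sq_sqrt (show (0 : ℝ) ≤ 2 by norm_num)
    nlinarith [sqrt_nonneg 2]
  refine (sum_abs_inner_sub_sub_inner_le J f o (fun v hv => hIball v (hJI hv))
    (fun u hu v hv => hIdiam u (hJI hu) v (hJI hv)) hB).trans ?_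
  have hJ0 : (0 : ℝ) ≤ #J - 1 := by linarith
  calc _ ≤ (#J - 1) * (B + 1) * (3.25 * ε * #J)
        + (1.5 * B + 1) * (ε * (6 / 5 * (#J * (#J - 1)))) := by
        gcongr
    _ = _ := by ring

/-- Corollary 1 of the paper: a point `o₀ ∈ O`, a large subset `J ⊆ I`
and a rounding `g` of `v ↦ f(v) − f(o₀)` to the `ε`-grid, with grid images of norm at
most `2(1 + 0.09/α)` and average inner-product error at most `(13 + 0.76/α)·ε`. -/
theorem energy_grid_corollary {d k : ℕ} (hd : 7 ≤ d)
    {ε : ℝ} (hε0 : 0 < ε) (hε : ε ≤ 1 / 36)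
    (I O : Finset (EuclideanSpace ℝ (Fin d)))
    (hIcard : I.card = 3 * d)
    (hIball : ∀ x ∈ I, ‖x‖ ≤ 1)
    (hIdiam : ∀ u ∈ I, ∀ v ∈ I, dist u v ≤ Real.sqrt 2)
    (hOI : O ⊆ I) (hOcard : O.card = d)
    (hOnorm : ∀ o ∈ O, ‖o‖ ≤ ε / 100)
    (f : EuclideanSpace ℝ (Fin d) → EuclideanSpace ℝ (Fin k))
    (hEnergy : energy I f 1 ≤ ε)
    {α : ℝ} (hα0 : 0 < α) (hα : α ≤ 1 / 16)
    (hεk : ε * Real.sqrt k ≤ 1) :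
    ∃ o₀ ∈ O, ∃ J ⊆ I,
      (1 - α) * (I.card : ℝ) ≤ (J.card : ℝ) ∧
      ∃ g : EuclideanSpace ℝ (Fin d) → EuclideanSpace ℝ (Fin k),
        (∀ v ∈ J,
          (∀ i : Fin k, (∃ m : ℤ, g v i = (m : ℝ) * ε) ∧
            |g v i - (f v i - f o₀ i)| ≤ ε) ∧
          ‖g v‖ ≤ 2 * (1 + 0.09 / α)) ∧
        (∑ p ∈ J.offDiag, |(inner ℝ (g p.1) (g p.2) : ℝ) - (inner ℝ p.1 p.2 : ℝ)|) /
          ((J.card : ℝ) * ((J.card : ℝ) - 1)) ≤ (13 + 0.76 / α) * ε := by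
  have hn : (#I : ℝ) = 3 * d := by rw [hIcard]; push_cast; ring
  have hI : (21 : ℝ) ≤ #I := by rw [hn]; exact_mod_cast (by omega : 21 ≤ 3 * d)
  obtain ⟨o, hoO, hstar, hJcard⟩ := exists_center_card_lowDistortionSet_ge (c := 3) hOI
    (card_pos.mp (by omega)) hε0 hα0 (by rw [hn, hOcard]) hEnergy
  set J := lowDistortionSet I f o (3 * ε / α)
  have hJI : J ⊆ I := lowDistortionSet_subset I f o _
  have hB : ∀ v ∈ J, ‖f v - f o‖ ≤ 1 + 0.09 / α := fun v hv =>
    (norm_sub_le_of_mem_lowDistortionSet (by positivity) hv).trans <|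
      (mul_le_mul_of_nonneg_left (add_le_add (hOnorm o hoO) (hIball v (hJI hv)))
        (by positivity)).trans (one_add_mul_one_add_le hε0 hε hα0 hα)
  obtain ⟨g, hg, hround⟩ := exists_grid_rounding_sum_abs_inner_sub_le hε0 J (fun v => f v - f o) hB
  have hcentered := sum_abs_inner_centered_sub_inner_le hε0 hε hα hJI hI hJcard hIball
    hIdiam (hOnorm o hoO) hstar (sum_abs_expans_sub_one_le_of_energy_le hEnergy) hB
  refine ⟨o, hoO, J, hJI, hJcard, g, fun v hv => ⟨hg v hv, ?_⟩, ?_⟩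
  · have hround_v : ‖g v - (f v - f o)‖ ≤ ε * √k := by
      simpa using EuclideanSpace.norm_le_mul_sqrt_card hε0.le fun i => (hg v hv i).2
    have := norm_le_norm_add_norm_sub' (g v) (f v - f o)
    linarith [hB v hv, div_nonneg (by norm_num : (0 : ℝ) ≤ 0.09) hα0.le]
  · have hN : (0 : ℝ) < #J * (#J - 1) := by nlinarith [(le_of_one_sub_mul_le hα hI hJcard).1]
    have hk : (ε / 2) ^ 2 * √k ≤ ε / 4 := by nlinarith
    rw [cast_card_offDiag] at hround
    rw [div_le_iff₀ hN]
    calc _ ≤ ∑ q ∈ J.offDiag, (|⟪g q.1, g q.2⟫ - ⟪f q.1 - f o, f q.2 - f o⟫|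
          + |⟪f q.1 - f o, f q.2 - f o⟫ - ⟪q.1, q.2⟫|) := sum_le_sum fun q _ => abs_sub_le _ _ _
      _ ≤ (ε * (1 + 0.09 / α) + ε / 4
          + ε * (3.25 * (1 + 0.09 / α + 1) + 1.2 * (1.5 * (1 + 0.09 / α) + 1)))
            * (#J * (#J - 1)) := by
        rw [sum_add_distrib]
        linarith [mul_le_mul_of_nonneg_left hk hN.le]
      _ ≤ _ := mul_le_mul_of_nonneg_right (grid_error_budget_le hε0 hα0) hN.le
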